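/- For a natural number N ≥ 1 and a real σ > 0, define R_N(σ) = (1/(√(2π)·(N−1)!)) · [ ∫_{N/σ²}^∞ t^{N−1} e^{−t} dt + 2^{N/2 − 1} · (N/σ²)^{N/2} · e^{−N/(2σ²)} · ∫_0^{N/(2σ²)} t^{N/2 − 1} e^{−t} dt ]. Then for every fixed σ with 0 < σ < 1, the product e^{N·(log σ + (1/σ² − 1)/2)} · R_N(σ) tends to 1/√(4π) as N → ∞. -/

import Mathlib

/-!
Put `x = σ⁻² > 1` and `L = log σ + (x - 1) / 2`, so that `x - 1 - log x = 2 L > 0`. Writing the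
lower incomplete gamma function as `Γ(a) - Γ(a, c)`, the scaled density becomes
`e^{N L} Γ(N, N x) / (√(2π) Γ(N)) + c_N (1 - Γ(N/2, N x/2) / Γ(N/2))` with
`c_N = 2^{N/2-1} N^{N/2} e^{-N/2} Γ(N/2) / (√(2π) Γ(N))`. The Chernoff bound
`Γ(a, a x) ≤ e^{-a (x - 1 - log x)} Γ(a)` makes both incomplete gamma terms `O(e^{-N L})`, and
Stirling's formula, applied separately along even and odd `N` (the odd case after the Legendre
duplication formula), gives `c_N → 1 / √(4π)`.
-/

open MeasureTheory Real Filter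

noncomputable def ginibreRealDensity (N : ℕ) (σ : ℝ) : ℝ :=
  (1 / (Real.sqrt (2 * π) * (Nat.factorial (N - 1) : ℝ))) *
    ((∫ t in Set.Ioi ((N : ℝ) / σ ^ 2), t ^ ((N : ℝ) - 1) * Real.exp (-t)) +
      (2 : ℝ) ^ ((N : ℝ) / 2 - 1) * ((N : ℝ) / σ ^ 2) ^ ((N : ℝ) / 2) *
          Real.exp (-(N : ℝ) / (2 * σ ^ 2)) *
        ∫ t in Set.Ioo (0 : ℝ) ((N : ℝ) / (2 * σ ^ 2)), t ^ ((N : ℝ) / 2 - 1) * Real.exp (-t))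

open Set Topology
open scoped Nat

lemma Real.Gamma_natCast_eq_factorial_div {n : ℕ} (hn : n ≠ 0) : Gamma n = n ! / n := by
  rw [eq_div_iff (by positivity), mul_comm, ← Gamma_add_one (by positivity),
    Gamma_nat_eq_factorial]

lemma exp_neg_natCast (n : ℕ) : exp (-(n : ℝ)) = (exp 1 ^ n)⁻¹ := by
  rw [← exp_nat_mul, mul_one, exp_neg]

lemma sqrt_four_mul_pi : √(4 * π) = 2 * √π := by
  rw [sqrt_mul (by norm_num), show (4 : ℝ) = 2 ^ 2 by norm_num, sqrt_sq two_pos.le]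

lemma Nat.tendsto_of_tendsto_even_odd {X : Type*} {f : ℕ → X} {l : Filter X}
    (he : Tendsto (fun k => f (2 * k)) atTop l) (ho : Tendsto (fun k => f (2 * k + 1)) atTop l) :
    Tendsto f atTop l := by
  intro s hs
  obtain ⟨a, ha⟩ := eventually_atTop.1 (he hs)
  obtain ⟨b, hb⟩ := eventually_atTop.1 (ho hs)
  refine eventually_atTop.2 ⟨2 * max a b + 1, fun n hn => ?_⟩
  rcases n.even_or_odd' with ⟨k, rfl | rfl⟩
  · exact ha k (by omega)
  · exact hb k (by omega)

noncomputable def upperGamma (a c : ℝ) : ℝ := ∫ t in Ioi c, t ^ (a - 1) * exp (-t)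

noncomputable def lowerGamma (a c : ℝ) : ℝ := ∫ t in Ioo 0 c, t ^ (a - 1) * exp (-t)

lemma integrableOn_rpow_mul_exp_neg_mul {a r : ℝ} (ha : 0 < a) (hr : 0 < r) :
    IntegrableOn (fun t : ℝ => t ^ (a - 1) * exp (-(r * t))) (Ioi 0) :=
  .of_integral_ne_zero (by rw [integral_rpow_mul_exp_neg_mul_Ioi ha hr]; positivity)

lemma integrableOn_rpow_mul_exp_neg {a : ℝ} (ha : 0 < a) :
    IntegrableOn (fun t : ℝ => t ^ (a - 1) * exp (-t)) (Ioi 0) := by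
  simpa using integrableOn_rpow_mul_exp_neg_mul ha one_pos

lemma lowerGamma_add_upperGamma {a c : ℝ} (ha : 0 < a) (hc : 0 ≤ c) :
    lowerGamma a c + upperGamma a c = Gamma a := by
  have hint := integrableOn_rpow_mul_exp_neg ha
  rw [lowerGamma, upperGamma, ← integral_Ioc_eq_integral_Ioo,
    ← setIntegral_union Ioc_disjoint_Ioi_same measurableSet_Ioi
      (hint.mono_set Ioc_subset_Ioi_self) (hint.mono_set (Ioi_subset_Ioi hc)),
    Ioc_union_Ioi_eq_Ioi hc]
  simpa using integral_rpow_mul_exp_neg_mul_Ioi ha one_pos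

lemma upperGamma_nonneg (a : ℝ) {c : ℝ} (hc : 0 ≤ c) : 0 ≤ upperGamma a c :=
  setIntegral_nonneg measurableSet_Ioi fun _ ht =>
    mul_nonneg (rpow_nonneg (hc.trans (le_of_lt ht)) _) (exp_pos _).le

/-- Chernoff bound: for `t ≥ a x` one has `e^{-t} ≤ e^{-a (x - 1)} e^{-t / x}`, and
`t^{a-1} e^{-t / x}` integrates to `x^a Γ(a)` over `(0, ∞)`. -/
lemma upperGamma_mul_le {a x : ℝ} (ha : 0 < a) (hx : 1 ≤ x) :
    upperGamma a (a * x) ≤ exp (-(a * (x - 1 - log x))) * Gamma a := by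
  have hx0 : 0 < x := one_pos.trans_le hx
  have hsub : Ioi (a * x) ⊆ Ioi 0 := Ioi_subset_Ioi (by positivity)
  have hint := integrableOn_rpow_mul_exp_neg_mul ha (inv_pos.mpr hx0)
  have hpoint : ∀ t ∈ Ioi (a * x), t ^ (a - 1) * exp (-t) ≤
      exp (-(a * (x - 1))) * (t ^ (a - 1) * exp (-(x⁻¹ * t))) := fun t ht => by
    rw [mul_left_comm, ← exp_add]
    refine mul_le_mul_of_nonneg_left (exp_le_exp.mpr ?_) (rpow_nonneg (hsub ht).le _)
    have : t / x ≤ t - a * (x - 1) := by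
      rw [div_le_iff₀ hx0]
      nlinarith [mem_Ioi.mp ht]
    rw [inv_mul_eq_div]
    linarith
  calc upperGamma a (a * x)
      ≤ ∫ t in Ioi (a * x), exp (-(a * (x - 1))) * (t ^ (a - 1) * exp (-(x⁻¹ * t))) :=
        setIntegral_mono_on ((integrableOn_rpow_mul_exp_neg ha).mono_set hsub)
          ((hint.mono_set hsub).const_mul _) measurableSet_Ioi hpoint
    _ ≤ exp (-(a * (x - 1))) * ∫ t in Ioi 0, t ^ (a - 1) * exp (-(x⁻¹ * t)) := by
        rw [integral_const_mul]
        refine mul_le_mul_of_nonneg_left (setIntegral_mono_set hint ?_ hsub.eventuallyLE)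
          (exp_pos _).le
        filter_upwards [self_mem_ae_restrict measurableSet_Ioi] with t ht
        exact mul_nonneg (rpow_nonneg (le_of_lt ht) _) (exp_pos _).le
    _ = exp (-(a * (x - 1 - log x))) * Gamma a := by
        rw [integral_rpow_mul_exp_neg_mul_Ioi ha (inv_pos.mpr hx0), one_div, inv_inv,
          rpow_def_of_pos hx0, ← mul_assoc, ← exp_add]
        ring_nf

lemma tendsto_exp_mul_upperGamma_div_Gamma {x μ : ℝ} (hx : 1 ≤ x) (hμ : μ < x - 1 - log x) :
    Tendsto (fun a : ℝ => exp (μ * a) * (upperGamma a (a * x) / Gamma a)) atTop (𝓝 0) := by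
  have hdecay : Tendsto (fun a : ℝ => exp (-((x - 1 - log x - μ) * a))) atTop (𝓝 0) :=
    tendsto_exp_neg_atTop_nhds_zero.comp (tendsto_id.const_mul_atTop (sub_pos.mpr hμ))
  refine squeeze_zero' ?_ ?_ hdecay
  · filter_upwards [eventually_gt_atTop 0] with a ha
    exact mul_nonneg (exp_pos _).le
      (div_nonneg (upperGamma_nonneg a (by positivity)) (Gamma_pos_of_pos ha).le)
  · filter_upwards [eventually_gt_atTop 0] with a ha
    calc exp (μ * a) * (upperGamma a (a * x) / Gamma a)
        ≤ exp (μ * a) * exp (-(a * (x - 1 - log x))) := by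
          gcongr
          exact (div_le_iff₀ (Gamma_pos_of_pos ha)).mpr (upperGamma_mul_le ha hx)
      _ = exp (-((x - 1 - log x - μ) * a)) := by rw [← exp_add]; ring_nf

noncomputable def gammaHalfRatio (N : ℕ) : ℝ :=
  2 ^ ((N : ℝ) / 2 - 1) * (N : ℝ) ^ ((N : ℝ) / 2) * exp (-(N : ℝ) / 2) *
    Gamma ((N : ℝ) / 2) / (√(2 * π) * Gamma N)

lemma gammaHalfRatio_eq_div_Gamma_add_half {N : ℕ} (hN : N ≠ 0) :
    gammaHalfRatio N = ((N : ℝ) / 2) ^ ((N : ℝ) / 2) * exp (-(N : ℝ) / 2) /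
      (√2 * Gamma ((N : ℝ) / 2 + 1 / 2)) := by
  set s := (N : ℝ) / 2 with hs
  have hs0 : 0 < s := by positivity
  have hNs : (N : ℝ) = 2 * s := by rw [hs]; ring
  have hdup := Gamma_mul_Gamma_add_half s
  rw [show (1 : ℝ) - 2 * s = -(2 * s - 1) by ring, rpow_neg two_pos.le] at hdup
  have hpow : (2 : ℝ) ^ (s - 1) * 2 ^ s = 2 ^ (2 * s - 1) := by
    rw [← rpow_add two_pos]; ring_nf
  rw [gammaHalfRatio, ← hs, hNs, mul_rpow two_pos.le hs0.le, ← mul_assoc, hpow,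
    sqrt_mul two_pos.le, div_eq_div_iff (by positivity) (by positivity)]
  have hdup' : Gamma s * Gamma (s + 1 / 2) * 2 ^ (2 * s - 1) = Gamma (2 * s) * √π := by
    rw [hdup]; field_simp
  linear_combination (√2 * s ^ s * exp (-(2 * s) / 2)) * hdup'

lemma gammaHalfRatio_two_mul {n : ℕ} (hn : n ≠ 0) :
    gammaHalfRatio (2 * n) =
      Stirling.stirlingSeq n / Stirling.stirlingSeq (2 * n) / √(4 * π) := by
  have h2n : 2 * n ≠ 0 := by positivity
  have hhalf : ((2 * n : ℕ) : ℝ) / 2 = n := by push_cast; ring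
  rw [gammaHalfRatio, hhalf, Gamma_natCast_eq_factorial_div hn,
    Gamma_natCast_eq_factorial_div h2n, rpow_sub two_pos, rpow_one, rpow_natCast, rpow_natCast,
    neg_div, hhalf, exp_neg_natCast, Stirling.stirlingSeq, Stirling.stirlingSeq]
  have hs1 : √(2 * ((2 * n : ℕ) : ℝ)) = 2 * √n := by
    rw [show 2 * ((2 * n : ℕ) : ℝ) = 2 ^ 2 * n by push_cast; ring, sqrt_mul (by positivity),
      sqrt_sq two_pos.le]
  have hs2 : √(2 * (n : ℝ)) = √2 * √n := sqrt_mul two_pos.le _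
  have hs3 : √(2 * π) = √2 * √π := sqrt_mul two_pos.le _
  rw [hs1, hs2, hs3, sqrt_four_mul_pi, div_pow, div_pow]
  push_cast
  have : (n : ℝ) ≠ 0 := by positivity
  field_simp
  ring

lemma gammaHalfRatio_two_mul_add_one {n : ℕ} (hn : n ≠ 0) :
    gammaHalfRatio (2 * n + 1) = (1 + 1 / 2 / n) ^ n * √(1 + 1 / 2 / n) * exp (-(1 / 2)) /
      (2 * Stirling.stirlingSeq n) := by
  have hhalf : ((2 * n + 1 : ℕ) : ℝ) / 2 = n + 1 / 2 := by push_cast; ring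
  have hbase : 1 + 1 / 2 / (n : ℝ) = (n + 1 / 2) / n := by field_simp
  rw [gammaHalfRatio_eq_div_Gamma_add_half (by positivity), neg_div, hhalf, add_assoc,
    add_halves, Gamma_nat_eq_factorial, rpow_add (by positivity), rpow_natCast, ← sqrt_eq_rpow,
    neg_add, exp_add, exp_neg_natCast, Stirling.stirlingSeq, hbase, div_pow, div_pow,
    sqrt_div (by positivity), sqrt_mul two_pos.le]
  field_simp
  rw [sq_sqrt two_pos.le]

lemma tendsto_gammaHalfRatio : Tendsto gammaHalfRatio atTop (𝓝 (1 / √(4 * π))) := by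
  have hS := Stirling.tendsto_stirlingSeq_sqrt_pi
  have hπ : √π ≠ 0 := by positivity
  refine Nat.tendsto_of_tendsto_even_odd ?_ ?_
  · have hlim :=
      (hS.div (hS.comp (tendsto_id.const_mul_atTop' two_pos)) hπ).div_const (√(4 * π))
    rw [div_self hπ] at hlim
    refine hlim.congr' ?_
    filter_upwards [eventually_ne_atTop 0] with n hn
    exact (gammaHalfRatio_two_mul hn).symm
  · have hsmall : Tendsto (fun n : ℕ => 1 + 1 / 2 / (n : ℝ)) atTop (𝓝 1) := by
      simpa using tendsto_const_nhds.add (tendsto_const_div_atTop_nhds_zero_nat (1 / 2 : ℝ))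
    have hlim := (((tendsto_one_add_div_pow_exp (1 / 2)).mul hsmall.sqrt).mul_const
      (exp (-(1 / 2)))).div (hS.const_mul 2) (by positivity)
    rw [Real.sqrt_one, mul_one, ← exp_add, add_neg_cancel, exp_zero, ← sqrt_four_mul_pi] at hlim
    refine hlim.congr' ?_
    filter_upwards [eventually_ne_atTop 0] with n hn
    exact (gammaHalfRatio_two_mul_add_one hn).symm

lemma ginibreRealDensity_eq (N : ℕ) (σ : ℝ) :
    ginibreRealDensity N σ = 1 / (√(2 * π) * (N - 1)!) * (upperGamma N (N / σ ^ 2) +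
      2 ^ ((N : ℝ) / 2 - 1) * ((N : ℝ) / σ ^ 2) ^ ((N : ℝ) / 2) * exp (-N / (2 * σ ^ 2)) *
        lowerGamma (N / 2) (N / (2 * σ ^ 2))) := rfl

lemma exp_mul_rpow_mul_exp {σ : ℝ} (hσ : 0 < σ) (N : ℕ) :
    exp (N * (log σ + (1 / σ ^ 2 - 1) / 2)) * ((N : ℝ) / σ ^ 2) ^ ((N : ℝ) / 2) *
      exp (-N / (2 * σ ^ 2)) = (N : ℝ) ^ ((N : ℝ) / 2) * exp (-N / 2) := by
  rw [div_eq_mul_inv (N : ℝ), mul_rpow N.cast_nonneg (by positivity),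
    rpow_def_of_pos (by positivity : 0 < (σ ^ 2)⁻¹), log_inv, log_pow]
  calc _ = (N : ℝ) ^ ((N : ℝ) / 2) * exp (N * (log σ + (1 / σ ^ 2 - 1) / 2) +
        -(2 * log σ) * (N / 2) + -N / (2 * σ ^ 2)) := by
        rw [exp_add, exp_add]; push_cast; ring
    _ = _ := by congr 2; field_simp; ring

lemma exp_mul_ginibreRealDensity {σ : ℝ} (hσ : 0 < σ) {N : ℕ} (hN : N ≠ 0) :
    exp (N * (log σ + (1 / σ ^ 2 - 1) / 2)) * ginibreRealDensity N σ =
      exp ((log σ + (1 / σ ^ 2 - 1) / 2) * N) * (upperGamma N (N * (1 / σ ^ 2)) / Gamma N) /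
          √(2 * π) +
        gammaHalfRatio N * (1 - upperGamma (N / 2) (N / 2 * (1 / σ ^ 2)) / Gamma (N / 2)) := by
  have hfac : ((N - 1)! : ℝ) = Gamma N := by
    obtain ⟨n, rfl⟩ := Nat.exists_eq_succ_of_ne_zero hN
    simp [Gamma_nat_eq_factorial]
  have hlow : lowerGamma (N / 2) (N / (2 * σ ^ 2)) =
      Gamma (N / 2) - upperGamma (N / 2) (N / (2 * σ ^ 2)) :=
    eq_sub_of_add_eq (lowerGamma_add_upperGamma (by positivity) (by positivity))
  have hΓ := (Gamma_pos_of_pos (by positivity : (0 : ℝ) < N / 2)).ne'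
  have hratio : gammaHalfRatio N * (1 - upperGamma (N / 2) (N / (2 * σ ^ 2)) / Gamma (N / 2)) =
      2 ^ ((N : ℝ) / 2 - 1) * ((N : ℝ) ^ ((N : ℝ) / 2) * exp (-N / 2)) *
        (Gamma (N / 2) - upperGamma (N / 2) (N / (2 * σ ^ 2))) / (√(2 * π) * Gamma N) := by
    rw [gammaHalfRatio, neg_div]
    field_simp
  rw [ginibreRealDensity_eq, hfac, hlow, mul_one_div (N : ℝ),
    show (N : ℝ) / 2 * (1 / σ ^ 2) = N / (2 * σ ^ 2) by ring, hratio,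
    ← exp_mul_rpow_mul_exp hσ N, mul_comm _ (N : ℝ)]
  ring

theorem stmt15 (σ : ℝ) (hσ0 : 0 < σ) (hσ1 : σ < 1) :
    Filter.Tendsto
      (fun N : ℕ =>
        Real.exp ((N : ℝ) * (Real.log σ + (1 / σ ^ 2 - 1) / 2)) * ginibreRealDensity N σ)
      Filter.atTop (nhds (1 / Real.sqrt (4 * π))) := by
  set L := log σ + (1 / σ ^ 2 - 1) / 2
  have hx : 1 < 1 / σ ^ 2 := one_lt_one_div (by positivity) (by nlinarith)
  have hgap : 1 / σ ^ 2 - 1 - log (1 / σ ^ 2) = 2 * L := by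
    rw [one_div, log_inv, log_pow]; push_cast; ring
  have hL : 0 < L := by linarith [log_lt_sub_one_of_pos (by positivity) hx.ne']
  have hfirst := (tendsto_exp_mul_upperGamma_div_Gamma hx.le (μ := L) (by linarith)).comp
    tendsto_natCast_atTop_atTop
  have hsecond := (tendsto_exp_mul_upperGamma_div_Gamma hx.le (μ := 0) (by linarith)).comp
    (tendsto_natCast_atTop_atTop.atTop_div_const two_pos)
  simp only [Function.comp_def, zero_mul, exp_zero, one_mul] at hsecond
  have hlim := (hfirst.div_const √(2 * π)).add
    (tendsto_gammaHalfRatio.mul ((tendsto_const_nhds (x := 1)).sub hsecond))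
  rw [zero_div, zero_add, sub_zero, mul_one] at hlim
  refine hlim.congr' ?_
  filter_upwards [eventually_ne_atTop 0] with N hN
  exact (exp_mul_ginibreRealDensity hσ0 hN).symm
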